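/- Let (u, φ, ψ, w) be a classical solution of the suspension-bridge Shear beam system in thermoelasticity of type III, and let c_p > 0 be a Poincaré constant for (0,L). Then the energy decays exponentially: there exist positive constants σ₀ and σ₁ such that E(t) ≤ σ₀ e^{−σ₁ t} for all t ≥ 0, where σ₁ depends only on the constitutive constants, L and c_p, and σ₀ is proportional to E(0). -/

import Mathlib

/-!
Multiplying (i), (ii), (iii), (iv) by `u_t`, `φ_t`, `ψ_t`, `w_t` and integrating by parts gives
`E' = -μ‖u_t‖² - γ‖φ_t‖² - κ‖w_xt‖²`; multiplying them by `u`, `φ`, `ψ`, `w` instead gives the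
derivative of `P = ∫ ρ u u_t + ρ₁ φ φ_t + ρ₃ w w_t + μ u² / 2 + γ φ² / 2`, which produces the
potential part of the energy with a negative sign. By Young's and Poincaré's inequalities
`|P| ≤ C E`, and for `N` large the Lyapunov functional `Λ = N E + P` satisfies `Λ' ≤ -E`.
Since `(N - C) E ≤ Λ ≤ (N + C) E`, this gives `Λ' ≤ -Λ / (N + C)`, hence exponential decay.
-/

open MeasureTheory Set

noncomputable section

/-- Partial derivative with respect to the time variable (second argument). -/
def pdt (f : ℝ → ℝ → ℝ) (x t : ℝ) : ℝ := deriv (fun s => f x s) t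

/-- Partial derivative with respect to the space variable (first argument). -/
def pdx (f : ℝ → ℝ → ℝ) (x t : ℝ) : ℝ := deriv (fun y => f y t) x

/-- A classical solution of the suspension-bridge Shear beam system in
thermoelasticity of type III. -/
structure IsShearSolution (L ρ α lm μ ρ₁ K γ b ρ₃ δ κ β : ℝ)
    (u φ ψ w : ℝ → ℝ → ℝ) : Prop where
  smooth_u : ContDiff ℝ 3 (fun p : ℝ × ℝ => u p.1 p.2)
  smooth_phi : ContDiff ℝ 3 (fun p : ℝ × ℝ => φ p.1 p.2)
  smooth_psi : ContDiff ℝ 3 (fun p : ℝ × ℝ => ψ p.1 p.2)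
  smooth_w : ContDiff ℝ 3 (fun p : ℝ × ℝ => w p.1 p.2)
  eq1 : ∀ x ∈ Ioo (0:ℝ) L, ∀ t : ℝ, 0 < t →
    ρ * pdt (pdt u) x t - α * pdx (pdx u) x t - lm * (φ x t - u x t)
      + μ * pdt u x t = 0
  eq2 : ∀ x ∈ Ioo (0:ℝ) L, ∀ t : ℝ, 0 < t →
    ρ₁ * pdt (pdt φ) x t - K * pdx (fun y s => pdx φ y s + ψ y s) x t
      + lm * (φ x t - u x t) + γ * pdt φ x t + β * pdx (pdt w) x t = 0
  eq3 : ∀ x ∈ Ioo (0:ℝ) L, ∀ t : ℝ, 0 < t →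
    -b * pdx (pdx ψ) x t + K * (pdx φ x t + ψ x t) = 0
  eq4 : ∀ x ∈ Ioo (0:ℝ) L, ∀ t : ℝ, 0 < t →
    ρ₃ * pdt (pdt w) x t - δ * pdx (pdx w) x t + β * pdx (pdt φ) x t
      - κ * pdx (pdx (pdt w)) x t = 0
  bc : ∀ t : ℝ, 0 ≤ t →
    u 0 t = 0 ∧ u L t = 0 ∧ φ 0 t = 0 ∧ φ L t = 0 ∧
    ψ 0 t = 0 ∧ ψ L t = 0 ∧ w 0 t = 0 ∧ w L t = 0

/-- The energy functional of the system. -/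
def energy (L ρ α lm ρ₁ K b ρ₃ δ : ℝ) (u φ ψ w : ℝ → ℝ → ℝ) (t : ℝ) : ℝ :=
  (1/2) * ∫ x in (0:ℝ)..L,
    (ρ * (pdt u x t)^2 + α * (pdx u x t)^2 + lm * (φ x t - u x t)^2
      + ρ₁ * (pdt φ x t)^2 + K * (pdx φ x t + ψ x t)^2 + b * (pdx ψ x t)^2
      + ρ₃ * (pdt w x t)^2 + δ * (pdx w x t)^2)

section PartialDerivatives

variable {f : ℝ → ℝ → ℝ}

theorem hasDerivAt_pdt (hf : ContDiff ℝ 1 (fun p : ℝ × ℝ => f p.1 p.2)) (x t : ℝ) :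
    HasDerivAt (f x ·) (pdt f x t) t :=
  ((hf.differentiable one_ne_zero _).comp t
    ((differentiableAt_const x).prodMk differentiableAt_id)).hasDerivAt

theorem hasDerivAt_pdx (hf : ContDiff ℝ 1 (fun p : ℝ × ℝ => f p.1 p.2)) (x t : ℝ) :
    HasDerivAt (f · t) (pdx f x t) x :=
  ((hf.differentiable one_ne_zero _).comp x
    (differentiableAt_id.prodMk (differentiableAt_const t))).hasDerivAt

theorem pdt_eq_fderiv (hf : ContDiff ℝ 1 (fun p : ℝ × ℝ => f p.1 p.2)) (x t : ℝ) :
    pdt f x t = fderiv ℝ (fun p : ℝ × ℝ => f p.1 p.2) (x, t) (0, 1) := by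
  have hline : HasDerivAt (fun s : ℝ => (x, s)) ((0 : ℝ), (1 : ℝ)) t :=
    (hasDerivAt_const t x).prodMk (hasDerivAt_id t)
  exact (((hf.differentiable one_ne_zero _).hasFDerivAt).comp_hasDerivAt t hline).deriv

theorem pdx_eq_fderiv (hf : ContDiff ℝ 1 (fun p : ℝ × ℝ => f p.1 p.2)) (x t : ℝ) :
    pdx f x t = fderiv ℝ (fun p : ℝ × ℝ => f p.1 p.2) (x, t) (1, 0) := by
  have hline : HasDerivAt (fun y : ℝ => (y, t)) ((1 : ℝ), (0 : ℝ)) x :=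
    (hasDerivAt_id x).prodMk (hasDerivAt_const x t)
  exact (((hf.differentiable one_ne_zero _).hasFDerivAt).comp_hasDerivAt x hline).deriv

theorem contDiff_pdt {m n : WithTop ℕ∞} (hf : ContDiff ℝ n (fun p : ℝ × ℝ => f p.1 p.2))
    (hmn : m + 1 ≤ n) : ContDiff ℝ m (fun p : ℝ × ℝ => pdt f p.1 p.2) := by
  have hf1 : ContDiff ℝ 1 (fun p : ℝ × ℝ => f p.1 p.2) := hf.of_le (le_add_self.trans hmn)
  simp only [pdt_eq_fderiv hf1]
  exact (hf.fderiv_right hmn).clm_apply contDiff_const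

theorem contDiff_pdx {m n : WithTop ℕ∞} (hf : ContDiff ℝ n (fun p : ℝ × ℝ => f p.1 p.2))
    (hmn : m + 1 ≤ n) : ContDiff ℝ m (fun p : ℝ × ℝ => pdx f p.1 p.2) := by
  have hf1 : ContDiff ℝ 1 (fun p : ℝ × ℝ => f p.1 p.2) := hf.of_le (le_add_self.trans hmn)
  simp only [pdx_eq_fderiv hf1]
  exact (hf.fderiv_right hmn).clm_apply contDiff_const

theorem fderiv_fderiv_apply {E F : Type*} [NormedAddCommGroup E] [NormedSpace ℝ E]
    [NormedAddCommGroup F] [NormedSpace ℝ F] {g : E → F} (hg : ContDiff ℝ 2 g) (q v w : E) :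
    fderiv ℝ (fun p => fderiv ℝ g p v) q w = fderiv ℝ (fderiv ℝ g) q w v := by
  have hd : Differentiable ℝ (fderiv ℝ g) := (hg.fderiv_right le_rfl).differentiable one_ne_zero
  rw [fderiv_clm_apply (hd q) (differentiableAt_const v)]
  simp

theorem pdt_pdx_comm (hf : ContDiff ℝ 2 (fun p : ℝ × ℝ => f p.1 p.2)) :
    pdt (pdx f) = pdx (pdt f) := by
  have hf1 : ContDiff ℝ 1 (fun p : ℝ × ℝ => f p.1 p.2) := hf.of_le one_le_two
  funext x t
  rw [pdt_eq_fderiv (contDiff_pdx hf le_rfl), pdx_eq_fderiv (contDiff_pdt hf le_rfl)]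
  simp only [pdx_eq_fderiv hf1, pdt_eq_fderiv hf1, fderiv_fderiv_apply hf]
  exact (hf.contDiffAt.isSymmSndFDerivAt (by simp)) _ _

theorem pdx_add {g : ℝ → ℝ → ℝ} (hf : ContDiff ℝ 1 (fun p : ℝ × ℝ => f p.1 p.2))
    (hg : ContDiff ℝ 1 (fun p : ℝ × ℝ => g p.1 p.2)) (x t : ℝ) :
    pdx (fun y s => f y s + g y s) x t = pdx f x t + pdx g x t :=
  ((hasDerivAt_pdx hf x t).fun_add (hasDerivAt_pdx hg x t)).deriv

theorem pdt_eq_zero_of_forall_nonneg {x t : ℝ} (hf : ∀ s, 0 ≤ s → f x s = 0) (ht : 0 < t) :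
    pdt f x t = 0 := by
  have h : (f x ·) =ᶠ[nhds t] fun _ => 0 := by
    filter_upwards [Ioi_mem_nhds ht] with s hs using hf s (le_of_lt hs)
  rw [pdt, h.deriv_eq, deriv_const]

end PartialDerivatives

theorem integral_add_of_continuous {f g : ℝ → ℝ} {a b : ℝ} (hf : Continuous f)
    (hg : Continuous g) :
    ∫ x in a..b, f x + g x = (∫ x in a..b, f x) + ∫ x in a..b, g x :=
  intervalIntegral.integral_add (hf.intervalIntegrable a b) (hg.intervalIntegrable a b)

theorem integral_sub_of_continuous {f g : ℝ → ℝ} {a b : ℝ} (hf : Continuous f)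
    (hg : Continuous g) :
    ∫ x in a..b, f x - g x = (∫ x in a..b, f x) - ∫ x in a..b, g x :=
  intervalIntegral.integral_sub (hf.intervalIntegrable a b) (hg.intervalIntegrable a b)

theorem hasDerivAt_integral_of_continuous {G G' : ℝ → ℝ → ℝ} {a b : ℝ}
    (hG : Continuous (fun p : ℝ × ℝ => G p.1 p.2))
    (hG' : Continuous (fun p : ℝ × ℝ => G' p.1 p.2))
    (hd : ∀ x t, HasDerivAt (G x ·) (G' x t) t) (t₀ : ℝ) :
    HasDerivAt (fun t => ∫ x in a..b, G x t) (∫ x in a..b, G' x t₀) t₀ := by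
  obtain ⟨M, hM⟩ : ∃ M, ∀ p ∈ uIcc a b ×ˢ Icc (t₀ - 1) (t₀ + 1), ‖G' p.1 p.2‖ ≤ M :=
    (isCompact_uIcc.prod isCompact_Icc).exists_bound_of_continuousOn hG'.continuousOn
  refine (intervalIntegral.hasDerivAt_integral_of_dominated_loc_of_deriv_le
    (F := fun t x => G x t) (F' := fun t x => G' x t) (bound := fun _ => M)
    (Metric.ball_mem_nhds t₀ one_pos)
    (Filter.Eventually.of_forall fun t => (hG.uncurry_right t).aestronglyMeasurable)
    ((hG.uncurry_right t₀).intervalIntegrable a b) (hG'.uncurry_right t₀).aestronglyMeasurable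
    (Filter.Eventually.of_forall fun x hx t ht => hM (x, t) ⟨uIoc_subset_uIcc hx, ?_⟩)
    intervalIntegrable_const
    (Filter.Eventually.of_forall fun x _ t _ => hd x t)).2
  rw [Metric.mem_ball, Real.dist_eq, abs_lt] at ht
  constructor <;> linarith

theorem hasDerivAt_integral_of_contDiff {G : ℝ → ℝ → ℝ} {a b : ℝ}
    (hG : ContDiff ℝ 1 (fun p : ℝ × ℝ => G p.1 p.2)) (t : ℝ) :
    HasDerivAt (fun s => ∫ x in a..b, G x s) (∫ x in a..b, pdt G x t) t :=
  hasDerivAt_integral_of_continuous hG.continuous (contDiff_pdt hG (zero_add 1).le).continuous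
    (hasDerivAt_pdt hG) t

theorem integral_eq_of_eq_add_deriv {g h Φ : ℝ → ℝ} {L : ℝ} (hL : 0 ≤ L) (hg : Continuous g)
    (hh : Continuous h) (hΦ : ContDiff ℝ 1 Φ) (hΦ0 : Φ 0 = 0) (hΦL : Φ L = 0)
    (heq : ∀ x ∈ Ioo 0 L, g x = h x + deriv Φ x) :
    ∫ x in (0:ℝ)..L, g x = ∫ x in (0:ℝ)..L, h x := by
  have hΦ' : Continuous (deriv Φ) := hΦ.continuous_deriv le_rfl
  rcases hL.eq_or_lt with rfl | hL
  · simp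
  have hIcc : EqOn g (fun x => h x + deriv Φ x) (Icc 0 L) := by
    refine EqOn.of_subset_closure heq hg.continuousOn (hh.add hΦ').continuousOn
      Ioo_subset_Icc_self ?_
    rw [closure_Ioo hL.ne]
  rw [intervalIntegral.integral_congr (uIcc_of_le hL.le ▸ hIcc),
    intervalIntegral.integral_add (hh.intervalIntegrable 0 L) (hΦ'.intervalIntegrable 0 L),
    intervalIntegral.integral_deriv_eq_sub
      (fun x _ => (hΦ.differentiable one_ne_zero).differentiableAt) (hΦ'.intervalIntegrable 0 L),
    hΦ0, hΦL, sub_zero, add_zero]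

theorem hasDerivAt_integral_of_eq_add_deriv {G : ℝ → ℝ → ℝ} {h Φ : ℝ → ℝ} {L t : ℝ}
    (hL : 0 ≤ L) (hG : ContDiff ℝ 1 (fun p : ℝ × ℝ => G p.1 p.2)) (hh : Continuous h)
    (hΦ : ContDiff ℝ 1 Φ) (hΦ0 : Φ 0 = 0) (hΦL : Φ L = 0)
    (heq : ∀ x ∈ Ioo 0 L, pdt G x t = h x + deriv Φ x) :
    HasDerivAt (fun s => ∫ x in (0:ℝ)..L, G x s) (∫ x in (0:ℝ)..L, h x) t := by
  rw [← integral_eq_of_eq_add_deriv hL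
    ((contDiff_pdt hG (zero_add 1).le).continuous.uncurry_right t) hh hΦ hΦ0 hΦL heq]
  exact hasDerivAt_integral_of_contDiff hG t

theorem le_mul_exp_of_deriv_le {F : ℝ → ℝ} {σ t : ℝ} (hF : ContinuousOn F (Ici 0))
    (hF' : DifferentiableOn ℝ F (Ioi 0)) (hderiv : ∀ s, 0 < s → deriv F s ≤ -σ * F s)
    (ht : 0 ≤ t) : F t ≤ F 0 * Real.exp (-σ * t) := by
  have hexp : ∀ s, HasDerivAt (fun s => Real.exp (σ * s)) (Real.exp (σ * s) * σ) s := fun s => by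
    simpa using ((hasDerivAt_id s).const_mul σ).exp
  have hanti : AntitoneOn (fun s => F s * Real.exp (σ * s)) (Ici 0) := by
    refine antitoneOn_of_deriv_nonpos (convex_Ici 0)
      (hF.mul (Real.continuous_exp.comp (continuous_const.mul continuous_id)).continuousOn) ?_ ?_
    · rw [interior_Ici]
      exact hF'.mul fun s _ => (hexp s).differentiableAt.differentiableWithinAt
    · rw [interior_Ici]
      intro s hs
      have hFs := (hF'.differentiableAt (Ioi_mem_nhds hs)).hasDerivAt
      rw [(hFs.fun_mul (hexp s)).deriv]
      nlinarith [hderiv s hs, Real.exp_pos (σ * s)]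
  have h := hanti self_mem_Ici ht ht
  simp only [mul_zero, Real.exp_zero, mul_one] at h
  calc F t = F t * Real.exp (σ * t) * Real.exp (-σ * t) := by
        rw [mul_assoc, ← Real.exp_add, neg_mul, add_neg_cancel, Real.exp_zero, mul_one]
    _ ≤ F 0 * Real.exp (-σ * t) := mul_le_mul_of_nonneg_right h (Real.exp_pos _).le

theorem le_mul_exp_of_lyapunov {E P : ℝ → ℝ} {C N t : ℝ} (hC : 0 ≤ C) (hCN : C < N)
    (hPE : ∀ s, 0 ≤ s → |P s| ≤ C * E s)
    (hcont : ContinuousOn (fun s => N * E s + P s) (Ici 0))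
    (hdiff : DifferentiableOn ℝ (fun s => N * E s + P s) (Ioi 0))
    (hderiv : ∀ s, 0 < s → deriv (fun s => N * E s + P s) s ≤ -E s) (ht : 0 ≤ t) :
    E t ≤ ((N + C) / (N - C) * E 0) * Real.exp (-(N + C)⁻¹ * t) := by
  have hNC : 0 < N - C := sub_pos.2 hCN
  have hNC' : 0 < N + C := by linarith
  have hlow : ∀ s, 0 ≤ s → (N - C) * E s ≤ N * E s + P s := fun s hs => by
    linarith [neg_abs_le (P s), hPE s hs]
  have hup : ∀ s, 0 ≤ s → N * E s + P s ≤ (N + C) * E s := fun s hs => by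
    linarith [le_abs_self (P s), hPE s hs]
  have hdecay := le_mul_exp_of_deriv_le hcont hdiff (σ := (N + C)⁻¹) (fun s hs => by
    have := hup s hs.le
    calc deriv (fun s => N * E s + P s) s ≤ -E s := hderiv s hs
      _ ≤ -(N + C)⁻¹ * (N * E s + P s) := by
        rw [neg_mul, neg_le_neg_iff, inv_mul_le_iff₀ hNC']; exact this) ht
  rw [div_mul_eq_mul_div, div_mul_eq_mul_div, le_div_iff₀ hNC, mul_comm (E t)]
  calc (N - C) * E t ≤ N * E t + P t := hlow t ht
    _ ≤ (N * E 0 + P 0) * Real.exp (-(N + C)⁻¹ * t) := hdecay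
    _ ≤ (N + C) * E 0 * Real.exp (-(N + C)⁻¹ * t) :=
      mul_le_mul_of_nonneg_right (hup 0 le_rfl) (Real.exp_pos _).le

theorem mul_le_sq_add_sq_div {ε : ℝ} (hε : 0 < ε) (a b : ℝ) :
    a * b ≤ ε / 2 * a ^ 2 + b ^ 2 / (2 * ε) := by
  have key : ε / 2 * a ^ 2 + b ^ 2 / (2 * ε) - a * b = (ε * a - b) ^ 2 / (2 * ε) := by
    field_simp; ring
  nlinarith [div_nonneg (sq_nonneg (ε * a - b)) (by positivity : (0:ℝ) ≤ 2 * ε)]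

def sqNorm (L : ℝ) (f : ℝ → ℝ → ℝ) (t : ℝ) : ℝ := ∫ x in (0:ℝ)..L, f x t ^ 2

theorem sqNorm_nonneg {L : ℝ} (hL : 0 ≤ L) (f : ℝ → ℝ → ℝ) (t : ℝ) : 0 ≤ sqNorm L f t :=
  intervalIntegral.integral_nonneg hL fun _ _ => sq_nonneg _

def IsPoincareConstant (L c : ℝ) : Prop :=
  ∀ f : ℝ → ℝ, ContDiff ℝ 1 f → f 0 = 0 → f L = 0 →
    (∫ x in (0:ℝ)..L, (f x)^2) ≤ c * ∫ x in (0:ℝ)..L, (deriv f x)^2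

theorem IsPoincareConstant.sqNorm_le {L c t : ℝ} {f : ℝ → ℝ → ℝ}
    (hc : IsPoincareConstant L c) (hf : ContDiff ℝ 1 (fun p : ℝ × ℝ => f p.1 p.2))
    (h0 : f 0 t = 0) (hL : f L t = 0) :
    sqNorm L f t ≤ c * sqNorm L (pdx f) t :=
  hc _ (hf.comp (contDiff_id.prodMk contDiff_const)) h0 hL

/-- Destructured with `obtain ⟨⟩`, these facts become hypotheses that `fun_prop` (also as the
`simp` discharger) can use; they are stated for `fun p => f p.1 p.2` because that discharger does
not unfold `Function.uncurry`. -/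
structure C1Partials (f : ℝ → ℝ → ℝ) : Prop where
  self : ContDiff ℝ 1 (fun p : ℝ × ℝ => f p.1 p.2)
  dt : ContDiff ℝ 1 (fun p : ℝ × ℝ => pdt f p.1 p.2)
  dx : ContDiff ℝ 1 (fun p : ℝ × ℝ => pdx f p.1 p.2)
  dtt : ContDiff ℝ 1 (fun p : ℝ × ℝ => pdt (pdt f) p.1 p.2)
  dxt : ContDiff ℝ 1 (fun p : ℝ × ℝ => pdx (pdt f) p.1 p.2)
  dxx : ContDiff ℝ 1 (fun p : ℝ × ℝ => pdx (pdx f) p.1 p.2)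
  dxxt : Continuous (fun p : ℝ × ℝ => pdx (pdx (pdt f)) p.1 p.2)
  comm : pdt (pdx f) = pdx (pdt f)

theorem C1Partials.of_contDiff {f : ℝ → ℝ → ℝ}
    (hf : ContDiff ℝ 3 (fun p : ℝ × ℝ => f p.1 p.2)) : C1Partials f :=
  have ht : ContDiff ℝ 2 (fun p : ℝ × ℝ => pdt f p.1 p.2) := contDiff_pdt hf (by norm_num)
  have hx : ContDiff ℝ 2 (fun p : ℝ × ℝ => pdx f p.1 p.2) := contDiff_pdx hf (by norm_num)
  have hxt : ContDiff ℝ 1 (fun p : ℝ × ℝ => pdx (pdt f) p.1 p.2) :=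
    contDiff_pdx ht (by norm_num)
  { self := hf.of_le (by norm_num)
    dt := ht.of_le one_le_two
    dx := hx.of_le one_le_two
    dtt := contDiff_pdt ht (by norm_num)
    dxt := hxt
    dxx := contDiff_pdx hx (by norm_num)
    dxxt := (contDiff_pdx hxt (zero_add 1).le).continuous
    comm := pdt_pdx_comm (hf.of_le (by norm_num)) }

def multiplierFunctional (L ρ ρ₁ ρ₃ μ γ : ℝ) (u φ w : ℝ → ℝ → ℝ) (t : ℝ) : ℝ :=
  ∫ x in (0:ℝ)..L, (ρ * (u x t * pdt u x t) + ρ₁ * (φ x t * pdt φ x t)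
    + ρ₃ * (w x t * pdt w x t) + μ / 2 * u x t ^ 2 + γ / 2 * φ x t ^ 2)

section ShearSolution

variable {L ρ α lm μ ρ₁ K γ b ρ₃ δ κ β : ℝ} {u φ ψ w : ℝ → ℝ → ℝ}

theorem IsShearSolution.c1Partials
    (hS : IsShearSolution L ρ α lm μ ρ₁ K γ b ρ₃ δ κ β u φ ψ w) :
    C1Partials u ∧ C1Partials φ ∧ C1Partials ψ ∧ C1Partials w :=
  ⟨.of_contDiff hS.smooth_u, .of_contDiff hS.smooth_phi, .of_contDiff hS.smooth_psi,
    .of_contDiff hS.smooth_w⟩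

theorem IsShearSolution.pdt_boundary
    (hS : IsShearSolution L ρ α lm μ ρ₁ K γ b ρ₃ δ κ β u φ ψ w) {t : ℝ} (ht : 0 < t) :
    pdt u 0 t = 0 ∧ pdt u L t = 0 ∧ pdt φ 0 t = 0 ∧ pdt φ L t = 0 ∧
    pdt ψ 0 t = 0 ∧ pdt ψ L t = 0 ∧ pdt w 0 t = 0 ∧ pdt w L t = 0 := by
  refine ⟨?_, ?_, ?_, ?_, ?_, ?_, ?_, ?_⟩ <;> refine pdt_eq_zero_of_forall_nonneg (fun s hs => ?_) ht
  exacts [(hS.bc s hs).1, (hS.bc s hs).2.1, (hS.bc s hs).2.2.1, (hS.bc s hs).2.2.2.1,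
    (hS.bc s hs).2.2.2.2.1, (hS.bc s hs).2.2.2.2.2.1, (hS.bc s hs).2.2.2.2.2.2.1,
    (hS.bc s hs).2.2.2.2.2.2.2]

theorem IsShearSolution.energy_eq
    (hS : IsShearSolution L ρ α lm μ ρ₁ K γ b ρ₃ δ κ β u φ ψ w) (t : ℝ) :
    energy L ρ α lm ρ₁ K b ρ₃ δ u φ ψ w t =
      (ρ * sqNorm L (pdt u) t + α * sqNorm L (pdx u) t
        + lm * sqNorm L (fun x s => φ x s - u x s) t
        + ρ₁ * sqNorm L (pdt φ) t + K * sqNorm L (fun x s => pdx φ x s + ψ x s) t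
        + b * sqNorm L (pdx ψ) t + ρ₃ * sqNorm L (pdt w) t + δ * sqNorm L (pdx w) t) / 2 := by
  obtain ⟨⟨⟩, ⟨⟩, ⟨⟩, ⟨⟩⟩ := hS.c1Partials
  simp (disch := fun_prop) only [energy, sqNorm, integral_add_of_continuous,
    intervalIntegral.integral_const_mul]
  ring

theorem IsShearSolution.differentiable_energy
    (hS : IsShearSolution L ρ α lm μ ρ₁ K γ b ρ₃ δ κ β u φ ψ w) :
    Differentiable ℝ (energy L ρ α lm ρ₁ K b ρ₃ δ u φ ψ w) := fun t => by
  obtain ⟨⟨⟩, ⟨⟩, ⟨⟩, ⟨⟩⟩ := hS.c1Partials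
  exact ((hasDerivAt_integral_of_contDiff (by fun_prop) t).const_mul (1 / 2)).differentiableAt

theorem IsShearSolution.pdt_energy_integrand
    (hS : IsShearSolution L ρ α lm μ ρ₁ K γ b ρ₃ δ κ β u φ ψ w) {x t : ℝ} (hx : x ∈ Ioo 0 L)
    (ht : 0 < t) :
    pdt (fun x t => ρ * (pdt u x t)^2 + α * (pdx u x t)^2 + lm * (φ x t - u x t)^2
        + ρ₁ * (pdt φ x t)^2 + K * (pdx φ x t + ψ x t)^2 + b * (pdx ψ x t)^2
        + ρ₃ * (pdt w x t)^2 + δ * (pdx w x t)^2) x t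
      = -2 * (μ * pdt u x t ^ 2 + γ * pdt φ x t ^ 2 + κ * pdx (pdt w) x t ^ 2)
        + deriv (fun y => 2 * (α * (pdt u y t * pdx u y t)
          + K * (pdt φ y t * (pdx φ y t + ψ y t)) + b * (pdt ψ y t * pdx ψ y t)
          + δ * (pdt w y t * pdx w y t) - β * (pdt φ y t * pdt w y t)
          + κ * (pdt w y t * pdx (pdt w) y t))) x := by
  obtain ⟨hu, hφ, hψ, hw⟩ := hS.c1Partials
  have e₂ := hS.eq2 x hx t ht
  rw [pdx_add hφ.dx hψ.self] at e₂
  have hG := (((((((((hasDerivAt_pdt hu.dt x t).fun_pow 2).const_mul ρ).fun_add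
    (((hasDerivAt_pdt hu.dx x t).fun_pow 2).const_mul α)).fun_add
    ((((hasDerivAt_pdt hφ.self x t).fun_sub (hasDerivAt_pdt hu.self x t)).fun_pow 2).const_mul
      lm)).fun_add
    (((hasDerivAt_pdt hφ.dt x t).fun_pow 2).const_mul ρ₁)).fun_add
    ((((hasDerivAt_pdt hφ.dx x t).fun_add (hasDerivAt_pdt hψ.self x t)).fun_pow 2).const_mul
      K)).fun_add
    (((hasDerivAt_pdt hψ.dx x t).fun_pow 2).const_mul b)).fun_add
    (((hasDerivAt_pdt hw.dt x t).fun_pow 2).const_mul ρ₃)).fun_add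
    (((hasDerivAt_pdt hw.dx x t).fun_pow 2).const_mul δ)
  have T₁ := ((hasDerivAt_pdx hu.dt x t).fun_mul (hasDerivAt_pdx hu.dx x t)).const_mul α
  have T₂ := ((hasDerivAt_pdx hφ.dt x t).fun_mul
    ((hasDerivAt_pdx hφ.dx x t).fun_add (hasDerivAt_pdx hψ.self x t))).const_mul K
  have T₃ := ((hasDerivAt_pdx hψ.dt x t).fun_mul (hasDerivAt_pdx hψ.dx x t)).const_mul b
  have T₄ := ((hasDerivAt_pdx hw.dt x t).fun_mul (hasDerivAt_pdx hw.dx x t)).const_mul δ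
  have T₅ := ((hasDerivAt_pdx hφ.dt x t).fun_mul (hasDerivAt_pdx hw.dt x t)).const_mul β
  have T₆ := ((hasDerivAt_pdx hw.dt x t).fun_mul (hasDerivAt_pdx hw.dxt x t)).const_mul κ
  refine hG.deriv.trans ?_
  rw [((((((T₁.fun_add T₂).fun_add T₃).fun_add T₄).fun_sub T₅).fun_add T₆).const_mul 2).deriv,
    hu.comm, hφ.comm, hψ.comm, hw.comm]
  linear_combination (2 * pdt u x t) * hS.eq1 x hx t ht + (2 * pdt φ x t) * e₂
    + (2 * pdt ψ x t) * hS.eq3 x hx t ht + (2 * pdt w x t) * hS.eq4 x hx t ht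

theorem IsShearSolution.hasDerivAt_energy
    (hS : IsShearSolution L ρ α lm μ ρ₁ K γ b ρ₃ δ κ β u φ ψ w) (hL : 0 ≤ L) {t : ℝ}
    (ht : 0 < t) :
    HasDerivAt (energy L ρ α lm ρ₁ K b ρ₃ δ u φ ψ w)
      (-(μ * sqNorm L (pdt u) t + γ * sqNorm L (pdt φ) t + κ * sqNorm L (pdx (pdt w)) t)) t := by
  obtain ⟨⟨⟩, ⟨⟩, ⟨⟩, ⟨⟩⟩ := hS.c1Partials
  obtain ⟨hu₀, huL, hφ₀, hφL, hψ₀, hψL, hw₀, hwL⟩ := hS.pdt_boundary ht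
  refine ((hasDerivAt_integral_of_eq_add_deriv hL (by fun_prop) (by fun_prop) (by fun_prop)
    (by simp [hu₀, hφ₀, hψ₀, hw₀]) (by simp [huL, hφL, hψL, hwL])
    fun x hx => hS.pdt_energy_integrand hx ht).const_mul (1 / 2)).congr_deriv ?_
  simp (disch := fun_prop) only [sqNorm, integral_add_of_continuous,
    intervalIntegral.integral_const_mul]
  ring

theorem IsShearSolution.differentiable_multiplierFunctional
    (hS : IsShearSolution L ρ α lm μ ρ₁ K γ b ρ₃ δ κ β u φ ψ w) :
    Differentiable ℝ (multiplierFunctional L ρ ρ₁ ρ₃ μ γ u φ w) := fun t => by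
  obtain ⟨⟨⟩, ⟨⟩, -, ⟨⟩⟩ := hS.c1Partials
  exact (hasDerivAt_integral_of_contDiff (by fun_prop) t).differentiableAt

theorem IsShearSolution.pdt_multiplier_integrand
    (hS : IsShearSolution L ρ α lm μ ρ₁ K γ b ρ₃ δ κ β u φ ψ w) {x t : ℝ} (hx : x ∈ Ioo 0 L)
    (ht : 0 < t) :
    pdt (fun x t => ρ * (u x t * pdt u x t) + ρ₁ * (φ x t * pdt φ x t)
        + ρ₃ * (w x t * pdt w x t) + μ / 2 * u x t ^ 2 + γ / 2 * φ x t ^ 2) x t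
      = ρ * pdt u x t ^ 2 + ρ₁ * pdt φ x t ^ 2 + ρ₃ * pdt w x t ^ 2
        - α * pdx u x t ^ 2 - lm * (φ x t - u x t) ^ 2 - K * (pdx φ x t + ψ x t) ^ 2
        - b * pdx ψ x t ^ 2 - δ * pdx w x t ^ 2 + β * (pdx w x t * pdt φ x t)
        + β * (pdx φ x t * pdt w x t) - κ * (pdx w x t * pdx (pdt w) x t)
        + deriv (fun y => α * (u y t * pdx u y t) + K * (φ y t * (pdx φ y t + ψ y t))
          + b * (ψ y t * pdx ψ y t) + δ * (w y t * pdx w y t) + κ * (w y t * pdx (pdt w) y t)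
          - β * (w y t * pdt φ y t) - β * (φ y t * pdt w y t)) x := by
  obtain ⟨hu, hφ, hψ, hw⟩ := hS.c1Partials
  have e₂ := hS.eq2 x hx t ht
  rw [pdx_add hφ.dx hψ.self] at e₂
  have hQ := (((((hasDerivAt_pdt hu.self x t).fun_mul (hasDerivAt_pdt hu.dt x t)).const_mul
    ρ).fun_add (((hasDerivAt_pdt hφ.self x t).fun_mul (hasDerivAt_pdt hφ.dt x t)).const_mul
    ρ₁)).fun_add (((hasDerivAt_pdt hw.self x t).fun_mul (hasDerivAt_pdt hw.dt x t)).const_mul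
    ρ₃)).fun_add (((hasDerivAt_pdt hu.self x t).fun_pow 2).const_mul (μ / 2))
    |>.fun_add (((hasDerivAt_pdt hφ.self x t).fun_pow 2).const_mul (γ / 2))
  have T₁ := ((hasDerivAt_pdx hu.self x t).fun_mul (hasDerivAt_pdx hu.dx x t)).const_mul α
  have T₂ := ((hasDerivAt_pdx hφ.self x t).fun_mul
    ((hasDerivAt_pdx hφ.dx x t).fun_add (hasDerivAt_pdx hψ.self x t))).const_mul K
  have T₃ := ((hasDerivAt_pdx hψ.self x t).fun_mul (hasDerivAt_pdx hψ.dx x t)).const_mul b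
  have T₄ := ((hasDerivAt_pdx hw.self x t).fun_mul (hasDerivAt_pdx hw.dx x t)).const_mul δ
  have T₅ := ((hasDerivAt_pdx hw.self x t).fun_mul (hasDerivAt_pdx hw.dxt x t)).const_mul κ
  have T₆ := ((hasDerivAt_pdx hw.self x t).fun_mul (hasDerivAt_pdx hφ.dt x t)).const_mul β
  have T₇ := ((hasDerivAt_pdx hφ.self x t).fun_mul (hasDerivAt_pdx hw.dt x t)).const_mul β
  refine hQ.deriv.trans ?_
  rw [(((((((T₁.fun_add T₂).fun_add T₃).fun_add T₄).fun_add T₅).fun_sub T₆).fun_sub T₇)).deriv]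
  linear_combination u x t * hS.eq1 x hx t ht + φ x t * e₂ + ψ x t * hS.eq3 x hx t ht
    + w x t * hS.eq4 x hx t ht

theorem IsShearSolution.hasDerivAt_multiplierFunctional
    (hS : IsShearSolution L ρ α lm μ ρ₁ K γ b ρ₃ δ κ β u φ ψ w) (hL : 0 ≤ L) {t : ℝ}
    (ht : 0 < t) :
    HasDerivAt (multiplierFunctional L ρ ρ₁ ρ₃ μ γ u φ w)
      (ρ * sqNorm L (pdt u) t + ρ₁ * sqNorm L (pdt φ) t + ρ₃ * sqNorm L (pdt w) t
        - α * sqNorm L (pdx u) t - lm * sqNorm L (fun x s => φ x s - u x s) t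
        - K * sqNorm L (fun x s => pdx φ x s + ψ x s) t - b * sqNorm L (pdx ψ) t
        - δ * sqNorm L (pdx w) t + β * (∫ x in (0:ℝ)..L, pdx w x t * pdt φ x t)
        + β * (∫ x in (0:ℝ)..L, pdx φ x t * pdt w x t)
        - κ * ∫ x in (0:ℝ)..L, pdx w x t * pdx (pdt w) x t) t := by
  obtain ⟨⟨⟩, ⟨⟩, ⟨⟩, ⟨⟩⟩ := hS.c1Partials
  obtain ⟨hu₀, huL, hφ₀, hφL, hψ₀, hψL, hw₀, hwL⟩ := hS.bc t ht.le
  refine (hasDerivAt_integral_of_eq_add_deriv hL (by fun_prop) (by fun_prop) (by fun_prop)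
    (by simp [hu₀, hφ₀, hψ₀, hw₀]) (by simp [huL, hφL, hψL, hwL])
    fun x hx => hS.pdt_multiplier_integrand hx ht).congr_deriv ?_
  simp (disch := fun_prop) only [sqNorm, integral_add_of_continuous, integral_sub_of_continuous,
    intervalIntegral.integral_const_mul]

theorem IsShearSolution.abs_multiplierFunctional_le
    (hS : IsShearSolution L ρ α lm μ ρ₁ K γ b ρ₃ δ κ β u φ ψ w) (hL : 0 ≤ L) {c : ℝ}
    (hc : IsPoincareConstant L c) (hρ : 0 ≤ ρ) (hρ₁ : 0 ≤ ρ₁) (hρ₃ : 0 ≤ ρ₃) (hμ : 0 ≤ μ)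
    (hγ : 0 ≤ γ) {t : ℝ} (ht : 0 ≤ t) :
    |multiplierFunctional L ρ ρ₁ ρ₃ μ γ u φ w t|
      ≤ ρ / 2 * sqNorm L (pdt u) t + ρ₁ / 2 * sqNorm L (pdt φ) t + ρ₃ / 2 * sqNorm L (pdt w) t
        + (ρ₁ + γ) * sqNorm L (fun x s => φ x s - u x s) t
        + ((ρ + μ) / 2 + (ρ₁ + γ)) * (c * sqNorm L (pdx u) t)
        + ρ₃ / 2 * (c * sqNorm L (pdx w) t) := by
  obtain ⟨hu, hφ, -, hw⟩ := hS.c1Partials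
  obtain ⟨⟩ := id hu; obtain ⟨⟩ := id hφ; obtain ⟨⟩ := id hw
  obtain ⟨hu₀, huL, -, -, -, -, hw₀, hwL⟩ := hS.bc t ht
  have hpoint : ∀ a a' p p' v v' : ℝ,
      |ρ * (a * a') + ρ₁ * (p * p') + ρ₃ * (v * v') + μ / 2 * a ^ 2 + γ / 2 * p ^ 2|
        ≤ ρ / 2 * a' ^ 2 + ρ₁ / 2 * p' ^ 2 + ρ₃ / 2 * v' ^ 2 + (ρ₁ + γ) * (p - a) ^ 2
          + ((ρ + μ) / 2 + (ρ₁ + γ)) * a ^ 2 + ρ₃ / 2 * v ^ 2 := fun a a' p p' v v' => by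
    have hp : p ^ 2 ≤ 2 * (p - a) ^ 2 + 2 * a ^ 2 := by nlinarith [sq_nonneg (p - 2 * a)]
    refine abs_le.2 ⟨?_, ?_⟩
    · nlinarith [mul_nonneg hρ (sq_nonneg (a + a')), mul_nonneg hρ₁ (sq_nonneg (p + p')),
        mul_nonneg hρ₃ (sq_nonneg (v + v')), mul_nonneg hμ (sq_nonneg a),
        mul_nonneg hγ (sq_nonneg p), mul_le_mul_of_nonneg_left hp (add_nonneg hρ₁ hγ)]
    · nlinarith [mul_nonneg hρ (sq_nonneg (a - a')), mul_nonneg hρ₁ (sq_nonneg (p - p')),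
        mul_nonneg hρ₃ (sq_nonneg (v - v')), mul_le_mul_of_nonneg_left hp (add_nonneg hρ₁ hγ)]
  calc |multiplierFunctional L ρ ρ₁ ρ₃ μ γ u φ w t|
      ≤ ∫ x in (0:ℝ)..L, |ρ * (u x t * pdt u x t) + ρ₁ * (φ x t * pdt φ x t)
          + ρ₃ * (w x t * pdt w x t) + μ / 2 * u x t ^ 2 + γ / 2 * φ x t ^ 2| :=
        intervalIntegral.abs_integral_le_integral_abs hL
    _ ≤ ∫ x in (0:ℝ)..L, (ρ / 2 * pdt u x t ^ 2 + ρ₁ / 2 * pdt φ x t ^ 2 + ρ₃ / 2 * pdt w x t ^ 2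
          + (ρ₁ + γ) * (φ x t - u x t) ^ 2 + ((ρ + μ) / 2 + (ρ₁ + γ)) * u x t ^ 2
          + ρ₃ / 2 * w x t ^ 2) :=
        intervalIntegral.integral_mono_on hL (Continuous.intervalIntegrable (by fun_prop) _ _)
          (Continuous.intervalIntegrable (by fun_prop) _ _) fun x _ => hpoint _ _ _ _ _ _
    _ = ρ / 2 * sqNorm L (pdt u) t + ρ₁ / 2 * sqNorm L (pdt φ) t + ρ₃ / 2 * sqNorm L (pdt w) t
          + (ρ₁ + γ) * sqNorm L (fun x s => φ x s - u x s) t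
          + ((ρ + μ) / 2 + (ρ₁ + γ)) * sqNorm L u t + ρ₃ / 2 * sqNorm L w t := by
        simp (disch := fun_prop) only [sqNorm, integral_add_of_continuous,
          intervalIntegral.integral_const_mul]
    _ ≤ _ := by
        gcongr
        exacts [hc.sqNorm_le hu.self hu₀ huL, hc.sqNorm_le hw.self hw₀ hwL]

theorem IsShearSolution.coupling_le (hS : IsShearSolution L ρ α lm μ ρ₁ K γ b ρ₃ δ κ β u φ ψ w)
    (hL : 0 ≤ L) {c : ℝ} (hc : IsPoincareConstant L c) (hδ : 0 < δ) {m : ℝ} (hm : 0 < m) {t : ℝ}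
    (ht : 0 ≤ t) :
    β * (∫ x in (0:ℝ)..L, pdx w x t * pdt φ x t) + β * (∫ x in (0:ℝ)..L, pdx φ x t * pdt w x t)
        - κ * (∫ x in (0:ℝ)..L, pdx w x t * pdx (pdt w) x t)
      ≤ δ / 2 * sqNorm L (pdx w) t + κ ^ 2 / δ * sqNorm L (pdx (pdt w)) t
        + β ^ 2 / δ * sqNorm L (pdt φ) t + m * sqNorm L (fun x s => pdx φ x s + ψ x s) t
        + m * (c * sqNorm L (pdx ψ) t) + β ^ 2 / (2 * m) * sqNorm L (pdt w) t := by
  obtain ⟨-, hφ, hψ, hw⟩ := hS.c1Partials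
  obtain ⟨⟩ := id hφ; obtain ⟨⟩ := id hψ; obtain ⟨⟩ := id hw
  obtain ⟨-, -, -, -, hψ₀, hψL, -, -⟩ := hS.bc t ht
  have hpoint : ∀ wx φt φx wt wxt ψ' : ℝ,
      β * (wx * φt) + β * (φx * wt) - κ * (wx * wxt)
        ≤ δ / 2 * wx ^ 2 + κ ^ 2 / δ * wxt ^ 2 + β ^ 2 / δ * φt ^ 2 + m * (φx + ψ') ^ 2
          + m * ψ' ^ 2 + β ^ 2 / (2 * m) * wt ^ 2 := fun wx φt φx wt wxt ψ' => by
    have h₁ := mul_le_sq_add_sq_div (half_pos hδ) wx (β * φt)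
    have h₂ := mul_le_sq_add_sq_div hm φx (β * wt)
    have h₃ := mul_le_sq_add_sq_div (half_pos hδ) wx (-κ * wxt)
    have h₄ : φx ^ 2 ≤ 2 * (φx + ψ') ^ 2 + 2 * ψ' ^ 2 := by nlinarith [sq_nonneg (φx + 2 * ψ')]
    have e₁ : (β * φt) ^ 2 / (2 * (δ / 2)) = β ^ 2 / δ * φt ^ 2 := by field_simp
    have e₂ : (β * wt) ^ 2 / (2 * m) = β ^ 2 / (2 * m) * wt ^ 2 := by field_simp
    have e₃ : (-κ * wxt) ^ 2 / (2 * (δ / 2)) = κ ^ 2 / δ * wxt ^ 2 := by field_simp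
    nlinarith [mul_le_mul_of_nonneg_left h₄ hm.le]
  calc _ = ∫ x in (0:ℝ)..L, (β * (pdx w x t * pdt φ x t) + β * (pdx φ x t * pdt w x t)
          - κ * (pdx w x t * pdx (pdt w) x t)) := by
        simp (disch := fun_prop) only [integral_add_of_continuous, integral_sub_of_continuous,
          intervalIntegral.integral_const_mul]
    _ ≤ ∫ x in (0:ℝ)..L, (δ / 2 * pdx w x t ^ 2 + κ ^ 2 / δ * pdx (pdt w) x t ^ 2
          + β ^ 2 / δ * pdt φ x t ^ 2 + m * (pdx φ x t + ψ x t) ^ 2 + m * ψ x t ^ 2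
          + β ^ 2 / (2 * m) * pdt w x t ^ 2) :=
        intervalIntegral.integral_mono_on hL (Continuous.intervalIntegrable (by fun_prop) _ _)
          (Continuous.intervalIntegrable (by fun_prop) _ _) fun x _ => hpoint _ _ _ _ _ _
    _ = δ / 2 * sqNorm L (pdx w) t + κ ^ 2 / δ * sqNorm L (pdx (pdt w)) t
          + β ^ 2 / δ * sqNorm L (pdt φ) t + m * sqNorm L (fun x s => pdx φ x s + ψ x s) t
          + m * sqNorm L ψ t + β ^ 2 / (2 * m) * sqNorm L (pdt w) t := by
        simp (disch := fun_prop) only [sqNorm, integral_add_of_continuous,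
          intervalIntegral.integral_const_mul]
    _ ≤ _ := by
        gcongr
        exact hc.sqNorm_le hψ.self hψ₀ hψL

theorem IsShearSolution.abs_multiplierFunctional_le_mul_energy
    (hS : IsShearSolution L ρ α lm μ ρ₁ K γ b ρ₃ δ κ β u φ ψ w) (hL : 0 ≤ L) {c C : ℝ}
    (hc : IsPoincareConstant L c) (hρ : 0 ≤ ρ) (hρ₁ : 0 ≤ ρ₁) (hρ₃ : 0 ≤ ρ₃) (hμ : 0 ≤ μ)
    (hγ : 0 ≤ γ) (hK : 0 ≤ K) (hb : 0 ≤ b) (hC : 1 ≤ C) (hCα : (ρ + μ + 2 * (ρ₁ + γ)) * c ≤ C * α)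
    (hClm : 2 * (ρ₁ + γ) ≤ C * lm) (hCδ : ρ₃ * c ≤ C * δ) {t : ℝ} (ht : 0 ≤ t) :
    |multiplierFunctional L ρ ρ₁ ρ₃ μ γ u φ w t| ≤ C * energy L ρ α lm ρ₁ K b ρ₃ δ u φ ψ w t := by
  have hP := hS.abs_multiplierFunctional_le hL hc hρ hρ₁ hρ₃ hμ hγ ht
  rw [hS.energy_eq t]
  have hn := fun f => sqNorm_nonneg hL f t
  nlinarith [mul_le_mul_of_nonneg_right hCα (hn (pdx u)), mul_le_mul_of_nonneg_right hClm
    (hn fun x s => φ x s - u x s), mul_le_mul_of_nonneg_right hCδ (hn (pdx w)),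
    mul_le_mul_of_nonneg_right hC (mul_nonneg hρ (hn (pdt u))),
    mul_le_mul_of_nonneg_right hC (mul_nonneg hρ₁ (hn (pdt φ))),
    mul_le_mul_of_nonneg_right hC (mul_nonneg hρ₃ (hn (pdt w))),
    mul_nonneg (mul_nonneg (zero_le_one.trans hC) hK) (hn fun x s => pdx φ x s + ψ x s),
    mul_nonneg (mul_nonneg (zero_le_one.trans hC) hb) (hn (pdx ψ))]

theorem IsShearSolution.deriv_lyapunov_le
    (hS : IsShearSolution L ρ α lm μ ρ₁ K γ b ρ₃ δ κ β u φ ψ w) (hL : 0 ≤ L) {c m N : ℝ}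
    (hc : IsPoincareConstant L c) (hα : 0 ≤ α) (hlm : 0 ≤ lm) (hρ₃ : 0 ≤ ρ₃) (hδ : 0 < δ)
    (hm : 0 < m) (hmK : m ≤ K / 2) (hmb : m * c ≤ b / 2) (hNu : 3 * ρ / 2 ≤ N * μ)
    (hNφ : 3 * ρ₁ / 2 + β ^ 2 / δ ≤ N * γ)
    (hNw : κ ^ 2 / δ + (3 * ρ₃ / 2 + β ^ 2 / (2 * m)) * c ≤ N * κ) {t : ℝ} (ht : 0 < t) :
    deriv (fun s => N * energy L ρ α lm ρ₁ K b ρ₃ δ u φ ψ w s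
        + multiplierFunctional L ρ ρ₁ ρ₃ μ γ u φ w s) t
      ≤ -energy L ρ α lm ρ₁ K b ρ₃ δ u φ ψ w t := by
  rw [(((hS.hasDerivAt_energy hL ht).const_mul N).fun_add
    (hS.hasDerivAt_multiplierFunctional hL ht)).deriv, hS.energy_eq t]
  obtain ⟨-, -, -, hw⟩ := hS.c1Partials
  obtain ⟨-, -, -, -, -, -, hw₀, hwL⟩ := hS.pdt_boundary ht
  have hX := hS.coupling_le hL hc hδ hm ht.le
  have hH := mul_le_mul_of_nonneg_left (hc.sqNorm_le hw.dt hw₀ hwL)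
    (by positivity : 0 ≤ 3 * ρ₃ / 2 + β ^ 2 / (2 * m))
  have hn := fun f => sqNorm_nonneg hL f t
  nlinarith [mul_le_mul_of_nonneg_right hNu (hn (pdt u)),
    mul_le_mul_of_nonneg_right hNφ (hn (pdt φ)),
    mul_le_mul_of_nonneg_right hNw (hn (pdx (pdt w))),
    mul_le_mul_of_nonneg_right hmK (hn fun x s => pdx φ x s + ψ x s),
    mul_le_mul_of_nonneg_right hmb (hn (pdx ψ)), mul_nonneg hα (hn (pdx u)),
    mul_nonneg hlm (hn fun x s => φ x s - u x s)]

open Filter in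
theorem eventually_abs_multiplierFunctional_le_mul_energy (hL : 0 ≤ L) {c : ℝ}
    (hc : IsPoincareConstant L c) (hρ : 0 ≤ ρ) (hα : 0 < α) (hlm : 0 < lm) (hμ : 0 ≤ μ)
    (hρ₁ : 0 ≤ ρ₁) (hK : 0 ≤ K) (hγ : 0 ≤ γ) (hb : 0 ≤ b) (hρ₃ : 0 ≤ ρ₃) (hδ : 0 < δ) :
    ∀ᶠ C in atTop, ∀ u φ ψ w, IsShearSolution L ρ α lm μ ρ₁ K γ b ρ₃ δ κ β u φ ψ w →
      ∀ t, 0 ≤ t →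
        |multiplierFunctional L ρ ρ₁ ρ₃ μ γ u φ w t|
          ≤ C * energy L ρ α lm ρ₁ K b ρ₃ δ u φ ψ w t := by
  filter_upwards [eventually_ge_atTop 1,
    (tendsto_id.atTop_mul_const hα).eventually_ge_atTop ((ρ + μ + 2 * (ρ₁ + γ)) * c),
    (tendsto_id.atTop_mul_const hlm).eventually_ge_atTop (2 * (ρ₁ + γ)),
    (tendsto_id.atTop_mul_const hδ).eventually_ge_atTop (ρ₃ * c)] with C hC hCα hClm hCδ
  exact fun u φ ψ w hS t ht => hS.abs_multiplierFunctional_le_mul_energy hL hc hρ hρ₁ hρ₃ hμ hγ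
    hK hb hC hCα hClm hCδ ht

open Filter in
theorem eventually_deriv_lyapunov_le (hL : 0 ≤ L) {c : ℝ} (hc : IsPoincareConstant L c)
    (hc₀ : 0 < c) (hα : 0 ≤ α) (hlm : 0 ≤ lm) (hμ : 0 < μ) (hK : 0 < K) (hγ : 0 < γ) (hb : 0 < b)
    (hρ₃ : 0 ≤ ρ₃) (hδ : 0 < δ) (hκ : 0 < κ) :
    ∀ᶠ N in atTop, ∀ u φ ψ w, IsShearSolution L ρ α lm μ ρ₁ K γ b ρ₃ δ κ β u φ ψ w →
      ∀ t, 0 < t →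
        deriv (fun s => N * energy L ρ α lm ρ₁ K b ρ₃ δ u φ ψ w s
            + multiplierFunctional L ρ ρ₁ ρ₃ μ γ u φ w s) t
          ≤ -energy L ρ α lm ρ₁ K b ρ₃ δ u φ ψ w t := by
  set m := min (K / 2) (b / (2 * c))
  have hm : 0 < m := lt_min (by positivity) (by positivity)
  have hmb : m * c ≤ b / 2 := by
    have := (le_div_iff₀ (by positivity)).1 (min_le_right (K / 2) (b / (2 * c)))
    linarith
  filter_upwards [(tendsto_id.atTop_mul_const hμ).eventually_ge_atTop (3 * ρ / 2),
    (tendsto_id.atTop_mul_const hγ).eventually_ge_atTop (3 * ρ₁ / 2 + β ^ 2 / δ),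
    (tendsto_id.atTop_mul_const hκ).eventually_ge_atTop
      (κ ^ 2 / δ + (3 * ρ₃ / 2 + β ^ 2 / (2 * m)) * c)] with N hNu hNφ hNw
  exact fun u φ ψ w hS t ht => hS.deriv_lyapunov_le hL hc hα hlm hρ₃ hδ hm (min_le_left _ _) hmb
    hNu hNφ hNw ht

end ShearSolution

theorem energy_exponential_decay_general
    {L ρ α lm μ ρ₁ K γ b ρ₃ δ κ β c_p : ℝ}
    (hL : 0 < L) (hρ : 0 < ρ) (hα : 0 < α) (hlm : 0 < lm) (hμ : 0 < μ)
    (hρ₁ : 0 < ρ₁) (hK : 0 < K) (hγ : 0 < γ) (hb : 0 < b) (hρ₃ : 0 < ρ₃)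
    (hδ : 0 < δ) (hκ : 0 < κ) (hcp : 0 < c_p)
    (hpoin : ∀ f : ℝ → ℝ, ContDiff ℝ 1 f → f 0 = 0 → f L = 0 →
      (∫ x in (0:ℝ)..L, (f x)^2) ≤ c_p * ∫ x in (0:ℝ)..L, (deriv f x)^2) :
    ∃ σ₁ : ℝ, 0 < σ₁ ∧ ∃ c : ℝ, 0 < c ∧
      ∀ u φ ψ w : ℝ → ℝ → ℝ,
        IsShearSolution L ρ α lm μ ρ₁ K γ b ρ₃ δ κ β u φ ψ w →
        ∀ t : ℝ, 0 ≤ t →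
          energy L ρ α lm ρ₁ K b ρ₃ δ u φ ψ w t
            ≤ (c * energy L ρ α lm ρ₁ K b ρ₃ δ u φ ψ w 0) * Real.exp (-σ₁ * t) := by
  obtain ⟨C, hC, hPE⟩ := ((Filter.eventually_ge_atTop 0).and
    (eventually_abs_multiplierFunctional_le_mul_energy (κ := κ) (β := β) hL.le hpoin hρ.le hα hlm
      hμ.le hρ₁.le hK.le hγ.le hb.le hρ₃.le hδ)).exists
  obtain ⟨N, hCN, hN⟩ := ((Filter.eventually_gt_atTop C).and
    (eventually_deriv_lyapunov_le (ρ := ρ) (ρ₁ := ρ₁) (β := β) hL.le hpoin hcp hα.le hlm.le hμ hK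
      hγ hb hρ₃.le hδ hκ)).exists
  refine ⟨(N + C)⁻¹, inv_pos.2 (by linarith), (N + C) / (N - C), div_pos (by linarith)
    (by linarith), fun u φ ψ w hS t ht => ?_⟩
  have hΛ : Differentiable ℝ fun s => N * energy L ρ α lm ρ₁ K b ρ₃ δ u φ ψ w s
      + multiplierFunctional L ρ ρ₁ ρ₃ μ γ u φ w s :=
    (hS.differentiable_energy.const_mul N).add hS.differentiable_multiplierFunctional
  exact le_mul_exp_of_lyapunov hC hCN (hPE u φ ψ w hS) hΛ.continuous.continuousOn
    hΛ.differentiableOn (hN u φ ψ w hS) ht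

/-- exponential decay of the energy. -/
theorem energy_exponential_decay
    {L ρ α lm μ ρ₁ K γ b ρ₃ δ κ β c_p : ℝ}
    (hL : 0 < L) (hρ : 0 < ρ) (hα : 0 < α) (hlm : 0 < lm) (hμ : 0 < μ)
    (hρ₁ : 0 < ρ₁) (hK : 0 < K) (hγ : 0 < γ) (hb : 0 < b) (hρ₃ : 0 < ρ₃)
    (hδ : 0 < δ) (hκ : 0 < κ) (hβ : β ≠ 0) (hcp : 0 < c_p)
    (hpoin : ∀ f : ℝ → ℝ, ContDiff ℝ 1 f → f 0 = 0 → f L = 0 →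
      (∫ x in (0:ℝ)..L, (f x)^2) ≤ c_p * ∫ x in (0:ℝ)..L, (deriv f x)^2) :
    ∃ σ₁ : ℝ, 0 < σ₁ ∧ ∃ c : ℝ, 0 < c ∧
      ∀ u φ ψ w : ℝ → ℝ → ℝ,
        IsShearSolution L ρ α lm μ ρ₁ K γ b ρ₃ δ κ β u φ ψ w →
        ∀ t : ℝ, 0 ≤ t →
          energy L ρ α lm ρ₁ K b ρ₃ δ u φ ψ w t
            ≤ (c * energy L ρ α lm ρ₁ K b ρ₃ δ u φ ψ w 0) * Real.exp (-σ₁ * t) :=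
  energy_exponential_decay_general hL hρ hα hlm hμ hρ₁ hK hγ hb hρ₃ hδ hκ hcp hpoin
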